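/- arXiv:0911.3350 — 2 statements merged into one kernel-verified Lean document; each statement's English description precedes it below -/
import Mathlib

section
/- Let m ≥ 3 and let B be a blocker in CK(2m) such that e = {2m−3, 2m−2} ∈ B and f = {2m−2, 2m−1} ∉ B. Let φ : ZMod (2m−2) → ZMod (2m) be the map sending the residue of a (0 ≤ a ≤ 2m−3) to the residue of a. Then the set B' = {{a, b} : a, b ∈ ZMod (2m−2), a ≠ b, {φ(a), φ(b)} ∈ B} equals the φ-preimage of B \ {e}, has exactly m−1 edges, and is a blocker in CK(2m−2) (it contains an edge of every SPM of CK(2m−2)). -/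
def inArc (n : ℕ) (a b z : ZMod n) : Prop :=
  0 < (z - a).val ∧ (z - a).val < (b - a).val

def Cross (n : ℕ) (e f : Sym2 (ZMod n)) : Prop :=
  ∃ a b c d : ZMod n, e = s(a, b) ∧ f = s(c, d) ∧
    a ≠ b ∧ a ≠ c ∧ a ≠ d ∧ b ≠ c ∧ b ≠ d ∧ c ≠ d ∧
    Xor' (inArc n a b c) (inArc n a b d)

def IsSPM (m : ℕ) (M : Finset (Sym2 (ZMod (2 * m)))) : Prop :=
  M.card = m ∧
  (∀ e ∈ M, ¬ e.IsDiag) ∧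
  (∀ v : ZMod (2 * m), ∃! e, e ∈ M ∧ v ∈ e) ∧
  (∀ e ∈ M, ∀ f ∈ M, ¬ Cross (2 * m) e f)

def IsBlockingSet (m : ℕ) (B : Set (Sym2 (ZMod (2 * m)))) : Prop :=
  (∀ e ∈ B, ¬ e.IsDiag) ∧
  ∀ M : Finset (Sym2 (ZMod (2 * m))), IsSPM m M → ∃ e ∈ M, e ∈ B

def IsBlocker (m : ℕ) (B : Finset (Sym2 (ZMod (2 * m)))) : Prop :=
  IsBlockingSet m (B : Set (Sym2 (ZMod (2 * m)))) ∧ B.card = m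

def IsBoundaryEdge (m : ℕ) (e : Sym2 (ZMod (2 * m))) : Prop :=
  ∃ i : ZMod (2 * m), e = s(i, i + 1)

def edgeOrder {n : ℕ} (e : Sym2 (ZMod n)) : ℕ :=
  Sym2.lift ⟨fun i j => min (i - j).val (j - i).val, fun i j => min_comm _ _⟩ e

def edgeSum {n : ℕ} (e : Sym2 (ZMod n)) : ZMod n :=
  Sym2.lift ⟨fun i j => i + j, fun i j => add_comm i j⟩ e

/-!
Identify CK(2m−2) with the first 2m−2 vertices of CK(2m). This embedding preserves crossings,
and the boundary edge f = {2m−2, 2m−1} crosses nothing, so adding f to an SPM of CK(2m−2) gives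
an SPM of CK(2m). As f ∉ B, the blocker B meets this lift in the image of an edge of B', so B'
is blocking. Every edge of B' is the image of an edge of B other than e, because e contains the
vertex 2m−2 outside the image; hence |B'| ≤ m − 1. Conversely, a blocking set of CK(2p) has at
least p edges: for a < p the SPMs {{a + t, a − 1 − t} : t < p} are pairwise edge-disjoint, their
edges having edge sums 2a − 1.
-/

namespace ZMod

lemma add_natCast_inj {n : ℕ} (a : ZMod n) {k l : ℕ} (hk : k < n) (hl : l < n) :
    a + k = a + l ↔ k = l := by
  rw [add_right_inj]
  refine ⟨fun h => ?_, congrArg _⟩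
  simpa [val_cast_of_lt hk, val_cast_of_lt hl] using congrArg val h

variable {n : ℕ} [NeZero n]

lemma val_sub_eq_ite (x y : ZMod n) :
    (x - y).val = if y.val ≤ x.val then x.val - y.val else n - (y.val - x.val) := by
  split_ifs with h
  · exact val_sub h
  · have hyx : (y - x).val = y.val - x.val := val_sub (by omega)
    rw [← neg_sub, neg_val, if_neg (fun h0 => by rw [h0, val_zero] at hyx; omega), hyx]

lemma val_neg_one_eq : (-1 : ZMod n).val = n - 1 := by
  obtain ⟨k, rfl⟩ := Nat.exists_eq_succ_of_ne_zero (NeZero.ne n)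
  exact val_neg_one k

lemma val_lt_pred_of_ne_neg_one {x : ZMod n} (hx : x ≠ -1) : x.val < n - 1 := by
  have hne : x.val ≠ (-1 : ZMod n).val := fun h => hx (val_injective n h)
  rw [val_neg_one_eq] at hne
  have := x.val_lt
  omega

lemma val_add_one_of_ne_neg_one {x : ZMod n} (hx : x ≠ -1) : (x + 1).val = x.val + 1 := by
  have hlt := val_lt_pred_of_ne_neg_one hx
  rw [val_add, val_one_eq_one_mod, Nat.mod_eq_of_lt (by omega : 1 < n), Nat.mod_eq_of_lt (by omega)]

lemma exists_eq_add_natCast (a v : ZMod n) : ∃ d < n, v = a + d :=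
  ⟨(v - a).val, (v - a).val_lt, by rw [natCast_zmod_val]; ring⟩

lemma injective_of_val_eq {N : ℕ} {ψ : ZMod n → ZMod N} (hψ : ∀ x, (ψ x).val = x.val) :
    Function.Injective ψ :=
  fun x y h => val_injective n (by rw [← hψ, ← hψ, h])

end ZMod

lemma Sym2.exists_eq_mk_of_map_eq_mk {α β : Type*} {f : α → β} {z : Sym2 α} {a b : β}
    (h : z.map f = s(a, b)) : ∃ x y, z = s(x, y) ∧ f x = a ∧ f y = b := by
  induction z using Sym2.ind with
  | _ x y =>
    rcases Sym2.eq_iff.mp h with ⟨h1, h2⟩ | ⟨h1, h2⟩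
    · exact ⟨x, y, rfl, h1, h2⟩
    · exact ⟨y, x, Sym2.eq_swap, h2, h1⟩

section Arc

variable {n : ℕ}

lemma inArc_add_left (c a b z : ZMod n) : inArc n (c + a) (c + b) (c + z) ↔ inArc n a b z := by
  simp only [inArc, add_sub_add_left_eq_sub]

lemma inArc_natCast_iff [NeZero n] {a b z : ℕ} (ha : a < n) (hb : b < n) (hz : z < n) :
    inArc n a b z ↔
      0 < (if a ≤ z then z - a else n - (a - z)) ∧
        (if a ≤ z then z - a else n - (a - z)) < (if a ≤ b then b - a else n - (a - b)) := by
  simp only [inArc, ZMod.val_sub_eq_ite, ZMod.val_cast_of_lt, ha, hb, hz]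

lemma not_inArc_add_one (i z : ZMod n) : ¬ inArc n i (i + 1) z := by
  have h1 : (1 : ZMod n).val ≤ 1 := by rw [ZMod.val_one_eq_one_mod]; exact Nat.mod_le 1 n
  rw [inArc, add_sub_cancel_left]
  omega

lemma inArc_add_one_self [NeZero n] {i z : ZMod n} (hzi : z ≠ i) (hzi' : z ≠ i + 1) :
    inArc n (i + 1) i z := by
  refine ⟨ZMod.val_pos.mpr (sub_ne_zero.mpr hzi'), ?_⟩
  rw [show i - (i + 1) = -1 by ring, ZMod.val_neg_one_eq]
  exact ZMod.val_lt_pred_of_ne_neg_one fun h => hzi (by linear_combination h)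

lemma inArc_add_one_iff [NeZero n] {a b z : ZMod n} (hza : z ≠ a) (hza' : z + 1 ≠ a)
    (hzb' : z + 1 ≠ b) : inArc n a b (z + 1) ↔ inArc n a b z := by
  have hsucc : (z + 1 - a).val = (z - a).val + 1 := by
    rw [show z + 1 - a = z - a + 1 by ring]
    exact ZMod.val_add_one_of_ne_neg_one fun h => hza' (by linear_combination h)
  have hpos : 0 < (z - a).val := ZMod.val_pos.mpr (sub_ne_zero.mpr hza)
  have hne : (z + 1 - a).val ≠ (b - a).val :=
    fun h => hzb' (sub_left_injective (ZMod.val_injective n h))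
  simp only [inArc] at hne ⊢
  omega

lemma inArc_map_iff [NeZero n] {N : ℕ} [NeZero N] (hnN : n ≤ N) {ψ : ZMod n → ZMod N}
    (hψ : ∀ x, (ψ x).val = x.val) (a b z : ZMod n) :
    inArc N (ψ a) (ψ b) (ψ z) ↔ inArc n a b z := by
  have := a.val_lt
  have := b.val_lt
  have := z.val_lt
  simp only [inArc, ZMod.val_sub_eq_ite, hψ]
  split_ifs <;> omega

end Arc

section Crossing

variable {n : ℕ}

lemma not_cross_self (e : Sym2 (ZMod n)) : ¬ Cross n e e := by
  rintro ⟨a, b, c, d, rfl, h, -, hac, had, -, -, -, -⟩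
  rcases Sym2.eq_iff.mp h with ⟨h1, -⟩ | ⟨h1, -⟩
  exacts [hac h1, had h1]

lemma not_cross_of_forall_inArc_iff {e : Sym2 (ZMod n)} {c d : ZMod n}
    (h : ∀ a b : ZMod n, e = s(a, b) → a ≠ b → a ≠ c → a ≠ d → b ≠ c → b ≠ d →
      (inArc n a b c ↔ inArc n a b d)) : ¬ Cross n e s(c, d) := by
  rintro ⟨a, b, c', d', he, hf, hab, hac, had, hbc, hbd, -, hx⟩
  rcases Sym2.eq_iff.mp hf with ⟨rfl, rfl⟩ | ⟨rfl, rfl⟩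
  · exact (xor_iff_not_iff _ _).mp hx (h a b he hab hac had hbc hbd)
  · exact (xor_iff_not_iff _ _).mp hx.symm (h a b he hab had hac hbd hbc)

lemma not_cross_mk_add_one_left [NeZero n] (i : ZMod n) (f : Sym2 (ZMod n)) :
    ¬ Cross n s(i, i + 1) f := by
  rintro ⟨a, b, c, d, he, -, -, hac, had, hbc, hbd, -, hx⟩
  rcases Sym2.eq_iff.mp he with ⟨rfl, rfl⟩ | ⟨rfl, rfl⟩
  · exact (xor_iff_not_iff _ _).mp hx
      (iff_of_false (not_inArc_add_one _ _) (not_inArc_add_one _ _))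
  · exact (xor_iff_not_iff _ _).mp hx
      (iff_of_true (inArc_add_one_self hbc.symm hac.symm) (inArc_add_one_self hbd.symm had.symm))

lemma not_cross_mk_add_one_right [NeZero n] (e : Sym2 (ZMod n)) (i : ZMod n) :
    ¬ Cross n e s(i, i + 1) :=
  not_cross_of_forall_inArc_iff fun _ _ _ _ hai hai' _ hbi' =>
    (inArc_add_one_iff hai.symm hai'.symm hbi'.symm).symm

lemma Cross.of_map [NeZero n] {N : ℕ} [NeZero N] (hnN : n ≤ N) {ψ : ZMod n → ZMod N}
    (hψ : ∀ x, (ψ x).val = x.val) {e f : Sym2 (ZMod n)}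
    (h : Cross N (e.map ψ) (f.map ψ)) : Cross n e f := by
  obtain ⟨_, _, _, _, he, hf, hab, hac, had, hbc, hbd, hcd, hx⟩ := h
  obtain ⟨a, b, rfl, rfl, rfl⟩ := Sym2.exists_eq_mk_of_map_eq_mk he
  obtain ⟨c, d, rfl, rfl, rfl⟩ := Sym2.exists_eq_mk_of_map_eq_mk hf
  rw [inArc_map_iff hnN hψ, inArc_map_iff hnN hψ] at hx
  exact ⟨a, b, c, d, rfl, rfl, ne_of_apply_ne ψ hab, ne_of_apply_ne ψ hac, ne_of_apply_ne ψ had,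
    ne_of_apply_ne ψ hbc, ne_of_apply_ne ψ hbd, ne_of_apply_ne ψ hcd, hx⟩

end Crossing

-- The chords {a + t, a - 1 - t}, t < p, with endpoints written as offsets from `a`.
def parallelMatching (p : ℕ) (a : ZMod (2 * p)) : Finset (Sym2 (ZMod (2 * p))) :=
  (Finset.range p).image fun t : ℕ => s(a + t, a + (2 * p - 1 - t : ℕ))

section ParallelMatching

variable {p : ℕ} (a : ZMod (2 * p))

lemma mem_parallelMatching {e : Sym2 (ZMod (2 * p))} :
    e ∈ parallelMatching p a ↔ ∃ t < p, s(a + t, a + (2 * p - 1 - t : ℕ)) = e := by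
  simp [parallelMatching]

lemma add_natCast_mem_parallelMatching_edge_iff {d t : ℕ} (hd : d < 2 * p) (ht : t < p) :
    a + d ∈ s(a + t, a + (2 * p - 1 - t : ℕ)) ↔ d = t ∨ d = 2 * p - 1 - t := by
  rw [Sym2.mem_iff, ZMod.add_natCast_inj a hd (by omega), ZMod.add_natCast_inj a hd (by omega)]

lemma card_parallelMatching : (parallelMatching p a).card = p := by
  rw [parallelMatching, Finset.card_image_of_injOn, Finset.card_range]
  intro t ht u hu h
  simp only [Finset.coe_range, Set.mem_Iio] at ht hu
  rcases Sym2.eq_iff.mp h with ⟨h1, -⟩ | ⟨h1, -⟩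
  · exact (ZMod.add_natCast_inj a (by omega) (by omega)).mp h1
  · have := (ZMod.add_natCast_inj a (by omega) (by omega)).mp h1
    omega

lemma not_isDiag_of_mem_parallelMatching {e : Sym2 (ZMod (2 * p))}
    (he : e ∈ parallelMatching p a) : ¬ e.IsDiag := by
  obtain ⟨t, ht, rfl⟩ := (mem_parallelMatching a).mp he
  rw [Sym2.mk_isDiag_iff, ZMod.add_natCast_inj a (by omega) (by omega)]
  omega

lemma existsUnique_mem_parallelMatching [NeZero p] (v : ZMod (2 * p)) :
    ∃! e, e ∈ parallelMatching p a ∧ v ∈ e := by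
  obtain ⟨d, hd, rfl⟩ := ZMod.exists_eq_add_natCast a v
  obtain ⟨t, htp, hdt⟩ : ∃ t < p, d = t ∨ d = 2 * p - 1 - t := by
    by_cases hdp : d < p
    exacts [⟨d, hdp, Or.inl rfl⟩, ⟨2 * p - 1 - d, by omega, Or.inr (by omega)⟩]
  refine ⟨_, ⟨(mem_parallelMatching a).mpr ⟨t, htp, rfl⟩,
    (add_natCast_mem_parallelMatching_edge_iff a hd htp).mpr hdt⟩, ?_⟩
  rintro e ⟨he, hde⟩
  obtain ⟨u, hu, rfl⟩ := (mem_parallelMatching a).mp he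
  have := (add_natCast_mem_parallelMatching_edge_iff a hd hu).mp hde
  obtain rfl : u = t := by omega
  rfl

lemma not_cross_of_mem_parallelMatching [NeZero p] {e f : Sym2 (ZMod (2 * p))}
    (he : e ∈ parallelMatching p a) (hf : f ∈ parallelMatching p a) : ¬ Cross (2 * p) e f := by
  obtain ⟨t, ht, rfl⟩ := (mem_parallelMatching a).mp he
  obtain ⟨u, hu, rfl⟩ := (mem_parallelMatching a).mp hf
  refine not_cross_of_forall_inArc_iff fun A B hAB _ _ _ _ _ => ?_
  rcases Sym2.eq_iff.mp hAB with ⟨rfl, rfl⟩ | ⟨rfl, rfl⟩ <;>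
  · rw [inArc_add_left, inArc_add_left, inArc_natCast_iff (by omega) (by omega) (by omega),
      inArc_natCast_iff (by omega) (by omega) (by omega)]
    split_ifs <;> omega

lemma isSPM_parallelMatching [NeZero p] : IsSPM p (parallelMatching p a) :=
  ⟨card_parallelMatching a, fun _ => not_isDiag_of_mem_parallelMatching a,
    existsUnique_mem_parallelMatching a,
    fun _ he _ hf => not_cross_of_mem_parallelMatching a he hf⟩

lemma edgeSum_of_mem_parallelMatching {e : Sym2 (ZMod (2 * p))}
    (he : e ∈ parallelMatching p a) : edgeSum e = 2 * a - 1 := by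
  obtain ⟨t, ht, rfl⟩ := (mem_parallelMatching a).mp he
  have hsum : ((t + (2 * p - 1 - t) + 1 : ℕ) : ZMod (2 * p)) = 0 := by
    rw [show t + (2 * p - 1 - t) + 1 = 2 * p by omega, ZMod.natCast_self]
  push_cast at hsum
  simp only [edgeSum, Sym2.lift_mk]
  linear_combination hsum

end ParallelMatching

lemma IsBlockingSet.le_ncard {p : ℕ} {B : Set (Sym2 (ZMod (2 * p)))} (hB : IsBlockingSet p B) :
    p ≤ B.ncard := by
  rcases Nat.eq_zero_or_pos p with rfl | hp
  · exact Nat.zero_le _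
  have : NeZero p := ⟨hp.ne'⟩
  choose g hgM hgB using fun k : Fin p =>
    hB.2 _ (isSPM_parallelMatching ((k : ℕ) : ZMod (2 * p)))
  have hg : Function.Injective g := by
    intro k l hkl
    have hsum := (edgeSum_of_mem_parallelMatching _ (hgM k)).symm.trans
      (hkl ▸ edgeSum_of_mem_parallelMatching _ (hgM l))
    have h2 : ((2 * k : ℕ) : ZMod (2 * p)) = ((2 * l : ℕ) : ZMod (2 * p)) := by
      push_cast; linear_combination hsum
    have := congrArg ZMod.val h2
    rw [ZMod.val_cast_of_lt (by omega), ZMod.val_cast_of_lt (by omega)] at this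
    exact Fin.ext (by omega)
  calc p = (Set.univ : Set (Fin p)).ncard := by simp
    _ ≤ B.ncard := Set.ncard_le_ncard_of_injOn g (fun k _ => hgB k) hg.injOn (Set.toFinite B)

section Lift

variable {m : ℕ} {ψ : ZMod (2 * (m - 1)) → ZMod (2 * m)}

lemma val_lt_of_mem_map (hm : 2 ≤ m) (hψ : ∀ x, (ψ x).val = x.val)
    {e : Sym2 (ZMod (2 * (m - 1)))} {w : ZMod (2 * m)} (hw : w ∈ e.map ψ) :
    w.val < 2 * (m - 1) := by
  have : NeZero (2 * (m - 1)) := ⟨by omega⟩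
  obtain ⟨x, -, rfl⟩ := Sym2.mem_map.mp hw
  exact hψ x ▸ x.val_lt

lemma exists_eq_of_val_lt (hm : 2 ≤ m) (hψ : ∀ x, (ψ x).val = x.val) {v : ZMod (2 * m)}
    (hv : v.val < 2 * (m - 1)) : ∃ z, ψ z = v := by
  have : NeZero (2 * m) := ⟨by omega⟩
  exact ⟨v.val, ZMod.val_injective _ (by rw [hψ, ZMod.val_cast_of_lt hv])⟩

lemma val_natCast_two_mul_sub_two (hm : 2 ≤ m) :
    ((2 * m - 2 : ℕ) : ZMod (2 * m)).val = 2 * (m - 1) := by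
  rw [ZMod.val_cast_of_lt (by omega)]
  omega

lemma natCast_two_mul_sub_one (hm : 2 ≤ m) :
    ((2 * m - 1 : ℕ) : ZMod (2 * m)) = ((2 * m - 2 : ℕ) : ZMod (2 * m)) + 1 := by
  rw [show 2 * m - 1 = 2 * m - 2 + 1 by omega, Nat.cast_succ]

lemma natCast_two_mul_sub_two_notMem_map (hm : 2 ≤ m) (hψ : ∀ x, (ψ x).val = x.val)
    (e : Sym2 (ZMod (2 * (m - 1)))) : ((2 * m - 2 : ℕ) : ZMod (2 * m)) ∉ e.map ψ := fun h => by
  have := val_lt_of_mem_map hm hψ h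
  rw [val_natCast_two_mul_sub_two hm] at this
  omega

lemma existsUnique_mem_insert_image_map (hm : 2 ≤ m) (hψ : ∀ x, (ψ x).val = x.val)
    {M : Finset (Sym2 (ZMod (2 * (m - 1))))} (hM : ∀ z, ∃! e, e ∈ M ∧ z ∈ e) (v : ZMod (2 * m)) :
    ∃! e, e ∈ insert s(((2 * m - 2 : ℕ) : ZMod (2 * m)), ((2 * m - 1 : ℕ) : ZMod (2 * m)))
      (M.image (Sym2.map ψ)) ∧ v ∈ e := by
  have : NeZero (2 * (m - 1)) := ⟨by omega⟩
  have : NeZero (2 * m) := ⟨by omega⟩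
  have hP := val_natCast_two_mul_sub_two hm
  have hQ : ((2 * m - 1 : ℕ) : ZMod (2 * m)).val = 2 * (m - 1) + 1 := by
    rw [ZMod.val_cast_of_lt (by omega)]
    omega
  by_cases hv : v.val < 2 * (m - 1)
  · obtain ⟨z, rfl⟩ := exists_eq_of_val_lt hm hψ hv
    obtain ⟨e, ⟨he, hze⟩, huniq⟩ := hM z
    refine ⟨e.map ψ, ⟨Finset.mem_insert_of_mem (Finset.mem_image_of_mem _ he),
      Sym2.mem_map.mpr ⟨z, hze, rfl⟩⟩, ?_⟩
    rintro g ⟨hg, hzg⟩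
    rcases Finset.mem_insert.mp hg with rfl | hg
    · rcases Sym2.mem_iff.mp hzg with h | h <;> rw [h] at hv <;> omega
    · obtain ⟨g', hg', rfl⟩ := Finset.mem_image.mp hg
      obtain ⟨x, hxg', hxz⟩ := Sym2.mem_map.mp hzg
      rw [huniq g' ⟨hg', ZMod.injective_of_val_eq hψ hxz ▸ hxg'⟩]
  · have hvPQ : v = ((2 * m - 2 : ℕ) : ZMod (2 * m)) ∨ v = ((2 * m - 1 : ℕ) : ZMod (2 * m)) := by
      have := v.val_lt
      by_cases h : v.val = 2 * (m - 1)
      exacts [Or.inl (ZMod.val_injective _ (by omega)), Or.inr (ZMod.val_injective _ (by omega))]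
    refine ⟨_, ⟨Finset.mem_insert_self _ _, Sym2.mem_iff.mpr hvPQ⟩, ?_⟩
    rintro g ⟨hg, hvg⟩
    rcases Finset.mem_insert.mp hg with rfl | hg
    · rfl
    · obtain ⟨g', -, rfl⟩ := Finset.mem_image.mp hg
      exact absurd (val_lt_of_mem_map hm hψ hvg) hv

lemma IsSPM.insert_image_map (hm : 2 ≤ m) (hψ : ∀ x, (ψ x).val = x.val)
    {M : Finset (Sym2 (ZMod (2 * (m - 1))))} (hM : IsSPM (m - 1) M) :
    IsSPM m (insert s(((2 * m - 2 : ℕ) : ZMod (2 * m)), ((2 * m - 1 : ℕ) : ZMod (2 * m)))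
      (M.image (Sym2.map ψ))) := by
  have : NeZero (2 * (m - 1)) := ⟨by omega⟩
  have : NeZero (2 * m) := ⟨by omega⟩
  obtain ⟨hcard, hdiag, hcover, hcross⟩ := hM
  have hinj := ZMod.injective_of_val_eq hψ
  refine ⟨?_, ?_, existsUnique_mem_insert_image_map hm hψ hcover, ?_⟩
  · have hnot_mem : s(((2 * m - 2 : ℕ) : ZMod (2 * m)), ((2 * m - 1 : ℕ) : ZMod (2 * m))) ∉
        M.image (Sym2.map ψ) := by
      intro h
      obtain ⟨e, -, he⟩ := Finset.mem_image.mp h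
      exact natCast_two_mul_sub_two_notMem_map hm hψ e (he ▸ Sym2.mem_mk_left _ _)
    rw [Finset.card_insert_of_notMem hnot_mem,
      Finset.card_image_of_injective _ (Sym2.map.injective hinj), hcard]
    omega
  · intro e he
    rcases Finset.mem_insert.mp he with rfl | he
    · intro h
      have := congrArg ZMod.val (Sym2.mk_isDiag_iff.mp h)
      rw [ZMod.val_cast_of_lt (by omega), ZMod.val_cast_of_lt (by omega)] at this
      omega
    · obtain ⟨e', he', rfl⟩ := Finset.mem_image.mp he
      rw [Sym2.isDiag_map hinj]
      exact hdiag e' he'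
  · rw [natCast_two_mul_sub_one hm]
    intro e he f hf
    rcases Finset.mem_insert.mp he with rfl | he
    · exact not_cross_mk_add_one_left _ f
    rcases Finset.mem_insert.mp hf with rfl | hf
    · exact not_cross_mk_add_one_right e _
    obtain ⟨e', he', rfl⟩ := Finset.mem_image.mp he
    obtain ⟨f', hf', rfl⟩ := Finset.mem_image.mp hf
    exact fun h => hcross e' he' f' hf' (Cross.of_map (by omega) hψ h)

end Lift

theorem induced_blocker (m : ℕ) (hm : 3 ≤ m)
    (B : Finset (Sym2 (ZMod (2 * m)))) (hB : IsBlocker m B)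
    (he : s(((2 * m - 3 : ℕ) : ZMod (2 * m)), ((2 * m - 2 : ℕ) : ZMod (2 * m))) ∈ B)
    (hf : s(((2 * m - 2 : ℕ) : ZMod (2 * m)), ((2 * m - 1 : ℕ) : ZMod (2 * m))) ∉ B)
    (φ : ZMod (2 * (m - 1)) → ZMod (2 * m)) (hφ : ∀ a, φ a = (a.val : ZMod (2 * m))) :
    {e' : Sym2 (ZMod (2 * (m - 1))) | ¬ e'.IsDiag ∧ Sym2.map φ e' ∈ B} =
      Sym2.map φ ⁻¹' ((B : Set (Sym2 (ZMod (2 * m)))) \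
        {s(((2 * m - 3 : ℕ) : ZMod (2 * m)), ((2 * m - 2 : ℕ) : ZMod (2 * m)))}) ∧
    {e' : Sym2 (ZMod (2 * (m - 1))) | ¬ e'.IsDiag ∧ Sym2.map φ e' ∈ B}.ncard = m - 1 ∧
    IsBlockingSet (m - 1)
      {e' : Sym2 (ZMod (2 * (m - 1))) | ¬ e'.IsDiag ∧ Sym2.map φ e' ∈ B} := by
  set e₀ := s(((2 * m - 3 : ℕ) : ZMod (2 * m)), ((2 * m - 2 : ℕ) : ZMod (2 * m)))
  set B' := {e' : Sym2 (ZMod (2 * (m - 1))) | ¬ e'.IsDiag ∧ Sym2.map φ e' ∈ B}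
  have hm2 : 2 ≤ m := by omega
  have : NeZero (2 * (m - 1)) := ⟨by omega⟩
  have hφv : ∀ a, (φ a).val = a.val := fun a => by
    rw [hφ, ZMod.val_cast_of_lt (a.val_lt.trans_le (by omega))]
  have hpre : B' = Sym2.map φ ⁻¹' ((B : Set _) \ {e₀}) := by
    ext e'
    refine ⟨fun ⟨_, hmem⟩ => ⟨hmem, fun h => ?_⟩, fun ⟨hmem, _⟩ => ⟨fun hd => ?_, hmem⟩⟩
    · refine natCast_two_mul_sub_two_notMem_map hm2 hφv e' ?_
      rw [Set.mem_singleton_iff.mp h]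
      exact Sym2.mem_mk_right _ _
    · exact hB.1.1 _ hmem (hd.map (f := φ))
  have hblock : IsBlockingSet (m - 1) B' := by
    refine ⟨fun e' he' => he'.1, fun M hM => ?_⟩
    obtain ⟨g, hgM, hgB⟩ := hB.1.2 _ (hM.insert_image_map hm2 hφv)
    rcases Finset.mem_insert.mp hgM with rfl | hg
    · exact absurd hgB hf
    · obtain ⟨e', he', rfl⟩ := Finset.mem_image.mp hg
      exact ⟨e', he', hM.2.1 e' he', hgB⟩
  have hle : B'.ncard ≤ ((B : Set _) \ {e₀}).ncard :=
    Set.ncard_le_ncard_of_injOn _ (fun _ h => by rwa [hpre] at h)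
      (Sym2.map.injective (ZMod.injective_of_val_eq hφv)).injOn (Set.toFinite _)
  rw [Set.ncard_sdiff_singleton_of_mem he, Set.ncard_coe_finset, hB.2] at hle
  exact ⟨hpre, le_antisymm hle hblock.le_ncard, hblock⟩
end

section
/- Let m ≥ 2, let B be a blocker in CK(2m), and let e = {i, j} ∈ B with 0 ≤ i < j ≤ 2m−1 (taking the canonical representatives) and j − i odd. Set k = (j − i − 1)/2 and l = m − 1 − k. Then B \ {e} contains exactly k edges with both endpoints in the arc {i, i+1, …, j}, exactly l edges with both endpoints in the complementary closed arc {j, j+1, …, 2m−1} ∪ {0, 1, …, i}, and no edge of B crosses e. -/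
/-!
Reversing the arc of `2m` vertices that starts at `s + 1` gives an SPM all of whose edges have
sum `2s + 1`; a blocker meets each of these `m` matchings, so its `m` edges have pairwise distinct
sums. Let `e = {i, j}` with `j = i + 2k + 1`. For `1 ≤ d ≤ k`, reversing separately the blocks
of positions `[0, 2d)`, `[2d, 2k + 2)` and `[2k + 2, 2m)` counted from `i` gives an SPM whose third
block consists of edges with the same sum as `e`; so `B` meets it in the first two blocks, in an
edge inside the arc of `e` whose sum determines `d`. This gives `k` edges of `B \ {e}` inside the
arc and, symmetrically, `l` outside it; since `B \ {e}` has only `k + l` edges there are no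
others, and an edge on one side of `e` cannot cross it.
-/

section Positions

variable {n : ℕ}

lemma natCast_add_injective {b p q : ℕ} (hp : p < n) (hq : q < n)
    (h : ((b + p : ℕ) : ZMod n) = ((b + q : ℕ) : ZMod n)) : p = q := by
  push_cast at h
  have hpq := (ZMod.natCast_eq_natCast_iff' p q n).mp (add_left_cancel h)
  rwa [Nat.mod_eq_of_lt hp, Nat.mod_eq_of_lt hq] at hpq

lemma natCast_add_self (a : ℕ) : ((a + n : ℕ) : ZMod n) = a := by
  rw [Nat.cast_add, ZMod.natCast_self, add_zero]

lemma exists_natCast_add_eq [NeZero n] (b : ℕ) (v : ZMod n) :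
    ∃ t < n, v = ((b + t : ℕ) : ZMod n) :=
  ⟨(v - b).val, ZMod.val_lt _, by push_cast [ZMod.natCast_zmod_val]; ring⟩

lemma sym2_natCast_add_inj {b t u t' u' : ℕ} (ht : t < n) (hu : u < n) (ht' : t' < n)
    (hu' : u' < n)
    (h : s(((b + t : ℕ) : ZMod n), ((b + u : ℕ) : ZMod n))
      = s(((b + t' : ℕ) : ZMod n), ((b + u' : ℕ) : ZMod n))) :
    t = t' ∧ u = u' ∨ t = u' ∧ u = t' := by
  rcases Sym2.eq_iff.mp h with ⟨h1, h2⟩ | ⟨h1, h2⟩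
  · exact .inl ⟨natCast_add_injective ht ht' h1, natCast_add_injective hu hu' h2⟩
  · exact .inr ⟨natCast_add_injective ht hu' h1, natCast_add_injective hu ht' h2⟩

lemma val_natCast_add_sub_natCast_add {b p q : ℕ} (hp : p < n) (hq : q < n) :
    (((b + p : ℕ) : ZMod n) - ((b + q : ℕ) : ZMod n)).val
      = if q ≤ p then p - q else n - (q - p) := by
  split_ifs with hqp
  · have hcast : ((b + p : ℕ) : ZMod n) - ((b + q : ℕ) : ZMod n)
        = ((p - q : ℕ) : ZMod n) := by
      push_cast [Nat.cast_sub hqp]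
      ring
    rw [hcast, ZMod.val_natCast_of_lt (by omega)]
  · have hcast : ((b + p : ℕ) : ZMod n) - ((b + q : ℕ) : ZMod n)
        = ((n - (q - p) : ℕ) : ZMod n) := by
      push_cast [Nat.cast_sub (show q - p ≤ n by omega), Nat.cast_sub (show p ≤ q by omega),
        ZMod.natCast_self]
      ring
    rw [hcast, ZMod.val_natCast_of_lt (by omega)]

/-- `r` lies strictly inside the arc running forward from `p` to `q`, for positions in `[0, n)`. -/
def PosBetween (p q r : ℕ) : Prop :=
  (p < q ∧ p < r ∧ r < q) ∨ (q < p ∧ (p < r ∨ r < q))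

lemma inArc_natCast_add_iff {b p q r : ℕ} (hp : p < n) (hq : q < n) (hr : r < n) :
    inArc n ((b + p : ℕ) : ZMod n) ((b + q : ℕ) : ZMod n) ((b + r : ℕ) : ZMod n)
      ↔ PosBetween p q r := by
  rw [inArc, PosBetween, val_natCast_add_sub_natCast_add hr hp,
    val_natCast_add_sub_natCast_add hq hp]
  split_ifs <;> omega

lemma ne_and_xor_posBetween_of_cross {b p q r s : ℕ} (hp : p < n) (hq : q < n) (hr : r < n)
    (hs : s < n)
    (h : Cross n s(((b + p : ℕ) : ZMod n), ((b + q : ℕ) : ZMod n))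
      s(((b + r : ℕ) : ZMod n), ((b + s : ℕ) : ZMod n))) :
    (p ≠ q ∧ p ≠ r ∧ p ≠ s ∧ q ≠ r ∧ q ≠ s ∧ r ≠ s) ∧
      Xor (PosBetween p q r) (PosBetween p q s) := by
  obtain ⟨x, y, z, w, hxy, hzw, hne, hxz, hxw, hyz, hyw, hzw', hxor⟩ := h
  have oriented : ∀ {p q r s : ℕ}, p < n → q < n → r < n → s < n →
      ((b + p : ℕ) : ZMod n) = x → ((b + q : ℕ) : ZMod n) = y →
      ((b + r : ℕ) : ZMod n) = z → ((b + s : ℕ) : ZMod n) = w →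
      (p ≠ q ∧ p ≠ r ∧ p ≠ s ∧ q ≠ r ∧ q ≠ s ∧ r ≠ s) ∧
        Xor (PosBetween p q r) (PosBetween p q s) := by
    rintro p q r s hp hq hr hs rfl rfl rfl rfl
    refine ⟨⟨?_, ?_, ?_, ?_, ?_, ?_⟩, ?_⟩ <;> try (rintro rfl; contradiction)
    rwa [inArc_natCast_add_iff hp hq hr, inArc_natCast_add_iff hp hq hs] at hxor
  rcases Sym2.eq_iff.mp hxy with ⟨h1, h2⟩ | ⟨h1, h2⟩ <;>
    rcases Sym2.eq_iff.mp hzw with ⟨h3, h4⟩ | ⟨h3, h4⟩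
  · exact oriented hp hq hr hs h1 h2 h3 h4
  all_goals
    first
    | have := oriented hp hq hs hr h1 h2 h4 h3
    | have := oriented hq hp hr hs h2 h1 h3 h4
    | have := oriented hq hp hs hr h2 h1 h4 h3
    simp only [Xor, PosBetween] at this ⊢
    omega

end Positions

section Arcs

variable {n : ℕ}

def OnArc (n b len : ℕ) (v : ZMod n) : Prop :=
  ∃ p ≤ len, v = ((b + p : ℕ) : ZMod n)

lemma exists_natCast_iff_onArc (b len : ℕ) (v : ZMod n) :
    (∃ a : ℕ, b ≤ a ∧ a ≤ b + len ∧ v = a) ↔ OnArc n b len v := by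
  constructor
  · rintro ⟨a, hba, hab, rfl⟩
    exact ⟨a - b, by omega, by rw [Nat.add_sub_cancel' hba]⟩
  · rintro ⟨p, hp, rfl⟩
    exact ⟨b + p, by omega, by omega, rfl⟩

lemma exists_natCast_wrap_iff_onArc {i j len : ℕ} (hij : i ≤ j) (hj : j < n)
    (hlen : j + len = n + i) (v : ZMod n) :
    (∃ a : ℕ, a ≤ n - 1 ∧ (j ≤ a ∨ a ≤ i) ∧ v = a) ↔ OnArc n j len v := by
  constructor
  · rintro ⟨a, ha, hja | hai, rfl⟩
    · exact ⟨a - j, by omega, by rw [Nat.add_sub_cancel' hja]⟩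
    · refine ⟨a + n - j, by omega, ?_⟩
      rw [show j + (a + n - j) = a + n by omega, natCast_add_self]
  · rintro ⟨p, hp, rfl⟩
    by_cases hjp : j + p < n
    · exact ⟨j + p, by omega, .inl (by omega), rfl⟩
    · exact ⟨j + p - n, by omega, .inr (by omega),
        by rw [← natCast_add_self (j + p - n), Nat.sub_add_cancel (by omega)]⟩

lemma not_cross_of_onArc {b len : ℕ} (hlen : len < n) {g : Sym2 (ZMod n)}
    (hg : ∀ v ∈ g, OnArc n b len v) :
    ¬ Cross n g s((b : ZMod n), ((b + len : ℕ) : ZMod n)) := by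
  rcases g with ⟨x, y⟩
  obtain ⟨p, hp, hx⟩ := hg x (Sym2.mem_mk_left x y)
  obtain ⟨q, hq, hy⟩ := hg y (Sym2.mem_mk_right x y)
  subst hx hy
  intro hcross
  rw [show ((b : ℕ) : ZMod n) = ((b + 0 : ℕ) : ZMod n) by rfl] at hcross
  obtain ⟨hne, hxor⟩ :=
    ne_and_xor_posBetween_of_cross (by omega) (by omega) (by omega) hlen hcross
  simp only [Xor, PosBetween] at hxor
  omega

lemma OnArc.eq_or_eq {b len len' : ℕ} (hn : len + len' = n) {v : ZMod n}
    (h : OnArc n b len v) (h' : OnArc n (b + len) len' v) :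
    v = b ∨ v = ((b + len : ℕ) : ZMod n) := by
  obtain ⟨p, hp, rfl⟩ := h
  obtain ⟨q, hq, hpq⟩ := h'
  rcases eq_or_lt_of_le hq with rfl | hq
  · left
    rw [hpq, add_assoc, hn, natCast_add_self]
  · rw [add_assoc] at hpq
    have := natCast_add_injective (by omega) (by omega) hpq
    right
    congr 2
    omega

lemma eq_of_forall_onArc {b len len' : ℕ} (hn : len + len' = n) {g : Sym2 (ZMod n)}
    (hg : ¬ g.IsDiag) (h : ∀ v ∈ g, OnArc n b len v)
    (h' : ∀ v ∈ g, OnArc n (b + len) len' v) :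
    g = s((b : ZMod n), ((b + len : ℕ) : ZMod n)) := by
  rcases g with ⟨x, y⟩
  rw [Sym2.mk_isDiag_iff] at hg
  have hx := (h x (Sym2.mem_mk_left x y)).eq_or_eq hn (h' x (Sym2.mem_mk_left x y))
  have hy := (h y (Sym2.mem_mk_right x y)).eq_or_eq hn (h' y (Sym2.mem_mk_right x y))
  rcases hx with rfl | rfl <;> rcases hy with rfl | rfl
  exacts [(hg rfl).elim, rfl, Sym2.eq_swap, (hg rfl).elim]

end Arcs

lemma two_mul_card_eq_of_existsUnique_mem {V : Type*} [Fintype V] [DecidableEq V]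
    {M : Finset (Sym2 V)} (hdiag : ∀ e ∈ M, ¬ e.IsDiag)
    (hcover : ∀ v, ∃! e, e ∈ M ∧ v ∈ e) :
    2 * M.card = Fintype.card V := by
  have hcount := Finset.sum_card_bipartiteAbove_eq_sum_card_bipartiteBelow
    (fun (e : Sym2 V) v => v ∈ e) (s := M) (t := Finset.univ)
  have hedge : ∀ e ∈ M,
      (Finset.bipartiteAbove (fun (e : Sym2 V) v => v ∈ e) Finset.univ e).card = 2 := by
    intro e he
    rw [← Sym2.card_toFinset_of_not_isDiag e (hdiag e he)]
    congr 1
    ext v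
    simp [Finset.bipartiteAbove]
  have hvert : ∀ v, (Finset.bipartiteBelow (fun (e : Sym2 V) v => v ∈ e) M v).card = 1 := by
    intro v
    obtain ⟨e, he, huniq⟩ := hcover v
    rw [Finset.card_eq_one]
    refine ⟨e, Finset.eq_singleton_iff_unique_mem.mpr ⟨?_, ?_⟩⟩
    · simpa [Finset.bipartiteBelow] using he
    · intro f hf
      exact huniq f (by simpa [Finset.bipartiteBelow] using hf)
  rw [Finset.sum_congr rfl hedge, Finset.sum_congr rfl (fun v _ => hvert v)] at hcount
  simpa [mul_comm] using hcount

structure IsNoncrossingPairing (n : ℕ) (π : ℕ → ℕ) : Prop where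
  lt : ∀ t < n, π t < n
  involutive : ∀ t < n, π (π t) = t
  ne : ∀ t < n, π t ≠ t
  nested : ∀ t u, u < n → t < u → u < π t → π u < π t

def pairingMatching (n b : ℕ) (π : ℕ → ℕ) : Finset (Sym2 (ZMod n)) :=
  (Finset.range n).image fun t => s(((b + t : ℕ) : ZMod n), ((b + π t : ℕ) : ZMod n))

lemma mem_pairingMatching {n b : ℕ} {π : ℕ → ℕ} {g : Sym2 (ZMod n)} :
    g ∈ pairingMatching n b π ↔
      ∃ t < n, g = s(((b + t : ℕ) : ZMod n), ((b + π t : ℕ) : ZMod n)) := by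
  simp only [pairingMatching, Finset.mem_image, Finset.mem_range, eq_comm (a := g)]

namespace IsNoncrossingPairing

variable {n b : ℕ} {π : ℕ → ℕ}

lemma exists_lt_of_mem (hπ : IsNoncrossingPairing n π) {g : Sym2 (ZMod n)}
    (hg : g ∈ pairingMatching n b π) :
    ∃ t < n, t < π t ∧ g = s(((b + t : ℕ) : ZMod n), ((b + π t : ℕ) : ZMod n)) := by
  obtain ⟨t, ht, rfl⟩ := mem_pairingMatching.mp hg
  rcases lt_or_gt_of_ne (hπ.ne t ht).symm with h | h
  · exact ⟨t, ht, h, rfl⟩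
  · refine ⟨π t, hπ.lt t ht, by rwa [hπ.involutive t ht], ?_⟩
    rw [hπ.involutive t ht, Sym2.eq_swap]

lemma not_isDiag_of_mem (hπ : IsNoncrossingPairing n π) {g : Sym2 (ZMod n)}
    (hg : g ∈ pairingMatching n b π) : ¬ g.IsDiag := by
  obtain ⟨t, ht, rfl⟩ := mem_pairingMatching.mp hg
  rw [Sym2.mk_isDiag_iff]
  exact fun h => hπ.ne t ht (natCast_add_injective ht (hπ.lt t ht) h).symm

lemma existsUnique_mem (hπ : IsNoncrossingPairing n π) [NeZero n] (v : ZMod n) :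
    ∃! g, g ∈ pairingMatching n b π ∧ v ∈ g := by
  obtain ⟨t, ht, rfl⟩ := exists_natCast_add_eq b v
  refine ⟨_, ⟨mem_pairingMatching.mpr ⟨t, ht, rfl⟩, Sym2.mem_mk_left _ _⟩, ?_⟩
  rintro g ⟨hg, hvg⟩
  obtain ⟨u, hu, rfl⟩ := mem_pairingMatching.mp hg
  rcases Sym2.mem_iff.mp hvg with h | h
  · rw [natCast_add_injective ht hu h]
  · rw [natCast_add_injective ht (hπ.lt u hu) h, hπ.involutive u hu, Sym2.eq_swap]

lemma not_cross_of_mem (hπ : IsNoncrossingPairing n π) {g g' : Sym2 (ZMod n)}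
    (hg : g ∈ pairingMatching n b π) (hg' : g' ∈ pairingMatching n b π) :
    ¬ Cross n g g' := by
  obtain ⟨t, ht, htπ, rfl⟩ := hπ.exists_lt_of_mem hg
  obtain ⟨u, hu, huπ, rfl⟩ := hπ.exists_lt_of_mem hg'
  intro hcross
  obtain ⟨hne, hxor⟩ := ne_and_xor_posBetween_of_cross ht (hπ.lt t ht) hu (hπ.lt u hu) hcross
  have htu := hπ.nested t u hu
  have hut := hπ.nested u t ht
  simp only [Xor, PosBetween] at hxor
  omega

theorem isSPM {m : ℕ} (hπ : IsNoncrossingPairing (2 * m) π) (hm : 0 < m) :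
    IsSPM m (pairingMatching (2 * m) b π) := by
  have : NeZero (2 * m) := ⟨by omega⟩
  have hcard := two_mul_card_eq_of_existsUnique_mem (fun _ => hπ.not_isDiag_of_mem (b := b))
    hπ.existsUnique_mem
  refine ⟨?_, fun _ => hπ.not_isDiag_of_mem, hπ.existsUnique_mem, fun _ hg _ hg' =>
    hπ.not_cross_of_mem hg hg'⟩
  rw [ZMod.card] at hcard
  omega

end IsNoncrossingPairing

def blockReversal (A C n t : ℕ) : ℕ :=
  if t < A then A - 1 - t else if t < C then A + C - 1 - t else C + n - 1 - t

lemma isNoncrossingPairing_blockReversal {A C n : ℕ} (hA : Even A) (hC : Even C) (hn : Even n)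
    (hAC : A ≤ C) (hCn : C ≤ n) : IsNoncrossingPairing n (blockReversal A C n) := by
  obtain ⟨A, rfl⟩ := hA
  obtain ⟨C, rfl⟩ := hC
  obtain ⟨n, rfl⟩ := hn
  constructor <;> intros <;> simp only [blockReversal] at * <;> split_ifs at * <;> omega

lemma edgeSum_natCast_add {n : ℕ} (b t u : ℕ) :
    edgeSum s(((b + t : ℕ) : ZMod n), ((b + u : ℕ) : ZMod n))
      = ((2 * b + (t + u) : ℕ) : ZMod n) := by
  simp only [edgeSum, Sym2.lift_mk]
  push_cast
  ring

namespace IsBlocker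

variable {m : ℕ} {B : Finset (Sym2 (ZMod (2 * m)))}

lemma exists_mem_pairingMatching (hB : IsBlocker m B) (hm : 0 < m) {π : ℕ → ℕ}
    (hπ : IsNoncrossingPairing (2 * m) π) (b : ℕ) :
    ∃ t < 2 * m, s(((b + t : ℕ) : ZMod (2 * m)), ((b + π t : ℕ) : ZMod (2 * m))) ∈ B := by
  obtain ⟨g, hgM, hgB⟩ := hB.1.2 _ (hπ.isSPM (b := b) hm)
  obtain ⟨t, ht, rfl⟩ := mem_pairingMatching.mp hgM
  exact ⟨t, ht, hgB⟩

lemma exists_edgeSum_eq (hB : IsBlocker m B) {s : ℕ} (hs : s < m) :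
    ∃ g ∈ B, edgeSum g = ((2 * s + 1 : ℕ) : ZMod (2 * m)) := by
  have hπ := isNoncrossingPairing_blockReversal (n := 2 * m) (by simp) (by simp) (by simp)
    le_rfl (Nat.zero_le _)
  obtain ⟨t, ht, hg⟩ := hB.exists_mem_pairingMatching (by omega) hπ (s + 1)
  refine ⟨_, hg, ?_⟩
  rw [edgeSum_natCast_add, ← natCast_add_self (2 * s + 1)]
  congr 1
  simp only [blockReversal]
  split_ifs <;> omega

lemma injOn_edgeSum (hB : IsBlocker m B) : Set.InjOn edgeSum (B : Set (Sym2 (ZMod (2 * m)))) := by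
  classical
  have hodd : (Finset.range m).image (fun s => ((2 * s + 1 : ℕ) : ZMod (2 * m)))
      ⊆ B.image edgeSum := by
    simp only [Finset.subset_iff, Finset.mem_image, Finset.mem_range]
    rintro _ ⟨s, hs, rfl⟩
    exact hB.exists_edgeSum_eq hs
  have hodd_card :
      ((Finset.range m).image fun s => ((2 * s + 1 : ℕ) : ZMod (2 * m))).card = m := by
    rw [Finset.card_image_of_injOn, Finset.card_range]
    intro s hs s' hs' h
    simp only [Finset.coe_range, Set.mem_Iio] at hs hs'
    have := natCast_add_injective (n := 2 * m) (b := 0) (p := 2 * s + 1) (q := 2 * s' + 1)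
      (by omega) (by omega) (by simpa using h)
    omega
  apply Finset.injOn_of_card_image_eq
  have := Finset.card_le_card hodd
  have := Finset.card_image_le (s := B) (f := edgeSum)
  have := hB.2
  omega

lemma exists_mem_inside (hB : IsBlocker m B) {b K d : ℕ} (hK : 2 * K + 1 < 2 * m)
    (he : s((b : ZMod (2 * m)), ((b + (2 * K + 1) : ℕ) : ZMod (2 * m))) ∈ B)
    (hd : 1 ≤ d) (hdK : d ≤ K) :
    ∃ t ≤ 2 * K + 1, ∃ u ≤ 2 * K + 1, (t + u = 2 * d - 1 ∨ t + u = 2 * K + 2 * d + 1) ∧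
      s(((b + t : ℕ) : ZMod (2 * m)), ((b + u : ℕ) : ZMod (2 * m))) ∈ B := by
  have hπ := isNoncrossingPairing_blockReversal (n := 2 * m) (A := 2 * d) (C := 2 * K + 2)
    (by simp) ⟨K + 1, by ring⟩ (by simp) (by omega) (by omega)
  obtain ⟨t, ht, hg⟩ := hB.exists_mem_pairingMatching (by omega) hπ b
  change s(((b + 0 : ℕ) : ZMod (2 * m)), _) ∈ B at he
  have hsum := fun h => hB.injOn_edgeSum hg he h
  rw [edgeSum_natCast_add, edgeSum_natCast_add] at hsum
  have hπt := hπ.lt t ht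
  set u := blockReversal (2 * d) (2 * K + 2) (2 * m) t with hu
  simp only [blockReversal] at hu
  split_ifs at hu
  · exact ⟨t, by omega, u, by omega, .inl (by omega), hg⟩
  · exact ⟨t, by omega, u, by omega, .inr (by omega), hg⟩
  · have hpar : 2 * b + (t + u) = 2 * b + (0 + (2 * K + 1)) + 2 * m := by omega
    rw [hpar, natCast_add_self] at hsum
    have := sym2_natCast_add_inj ht hπt (by omega) hK (hsum rfl)
    omega

lemma le_ncard_inside (hB : IsBlocker m B) {b K : ℕ} (hK : 2 * K + 1 < 2 * m)
    (he : s((b : ZMod (2 * m)), ((b + (2 * K + 1) : ℕ) : ZMod (2 * m))) ∈ B) :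
    K ≤ {g | g ∈ B ∧ g ≠ s((b : ZMod (2 * m)), ((b + (2 * K + 1) : ℕ) : ZMod (2 * m))) ∧
      ∀ v ∈ g, OnArc (2 * m) b (2 * K + 1) v}.ncard := by
  have hchoice : ∀ d ∈ Set.Icc 1 K, ∃ g : Sym2 (ZMod (2 * m)),
      ∃ t ≤ 2 * K + 1, ∃ u ≤ 2 * K + 1,
      (t + u = 2 * d - 1 ∨ t + u = 2 * K + 2 * d + 1) ∧ g ∈ B ∧
      g = s(((b + t : ℕ) : ZMod (2 * m)), ((b + u : ℕ) : ZMod (2 * m))) := by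
    rintro d ⟨hd, hdK⟩
    obtain ⟨t, ht, u, hu, hsum, hg⟩ := hB.exists_mem_inside hK he hd hdK
    exact ⟨_, t, ht, u, hu, hsum, hg, rfl⟩
  choose! f hf using hchoice
  calc K = (Set.Icc 1 K).ncard := by simp
    _ ≤ _ := by
      refine Set.ncard_le_ncard_of_injOn f ?_ ?_ ((B.finite_toSet).subset fun g hg => hg.1)
      · intro d hd
        obtain ⟨t, ht, u, hu, hsum, hg, hfd⟩ := hf d hd
        obtain ⟨hd₁, hd₂⟩ := hd
        refine ⟨hg, ?_, ?_⟩
        · rw [hfd, show ((b : ℕ) : ZMod (2 * m)) = ((b + 0 : ℕ) : ZMod (2 * m)) from rfl]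
          intro h
          have := sym2_natCast_add_inj (by omega) (by omega) (by omega) hK h
          omega
        · intro v hv
          rw [hfd, Sym2.mem_iff] at hv
          rcases hv with rfl | rfl
          exacts [⟨t, ht, rfl⟩, ⟨u, hu, rfl⟩]
      · intro d hd d' hd' h
        obtain ⟨t, ht, u, hu, hsum, -, hfd⟩ := hf d hd
        obtain ⟨t', ht', u', hu', hsum', -, hfd'⟩ := hf d' hd'
        rw [hfd, hfd'] at h
        have := sym2_natCast_add_inj (by omega) (by omega) (by omega) (by omega) h
        simp only [Set.mem_Icc] at hd hd'
        omega

theorem ncard_sides (hB : IsBlocker m B) {b K L : ℕ} (hKL : 2 * K + 1 + (2 * L + 1) = 2 * m)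
    (he : s((b : ZMod (2 * m)), ((b + (2 * K + 1) : ℕ) : ZMod (2 * m))) ∈ B) :
    {g | g ∈ B ∧ g ≠ s((b : ZMod (2 * m)), ((b + (2 * K + 1) : ℕ) : ZMod (2 * m))) ∧
        ∀ v ∈ g, OnArc (2 * m) b (2 * K + 1) v}.ncard = K ∧
    {g | g ∈ B ∧ g ≠ s((b : ZMod (2 * m)), ((b + (2 * K + 1) : ℕ) : ZMod (2 * m))) ∧
        ∀ v ∈ g, OnArc (2 * m) (b + (2 * K + 1)) (2 * L + 1) v}.ncard = L ∧
    ∀ g ∈ B,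
      ¬ Cross (2 * m) g s((b : ZMod (2 * m)), ((b + (2 * K + 1) : ℕ) : ZMod (2 * m))) := by
  set e := s((b : ZMod (2 * m)), ((b + (2 * K + 1) : ℕ) : ZMod (2 * m)))
  set I := {g | g ∈ B ∧ g ≠ e ∧ ∀ v ∈ g, OnArc (2 * m) b (2 * K + 1) v}
  set O := {g | g ∈ B ∧ g ≠ e ∧ ∀ v ∈ g, OnArc (2 * m) (b + (2 * K + 1)) (2 * L + 1) v}
  have he' : e = s((((b + (2 * K + 1) : ℕ)) : ZMod (2 * m)),
      ((b + (2 * K + 1) + (2 * L + 1) : ℕ) : ZMod (2 * m))) := by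
    rw [add_assoc, hKL, natCast_add_self, Sym2.eq_swap]
  have hI : K ≤ I.ncard := hB.le_ncard_inside (by omega) he
  have hO : L ≤ O.ncard := by
    have := hB.le_ncard_inside (by omega) (he' ▸ he)
    rwa [← he'] at this
  have hdisj : Disjoint I O := Set.disjoint_left.mpr fun g hgI hgO =>
    hgI.2.1 (eq_of_forall_onArc (by omega) (hB.1.1 g hgI.1) hgI.2.2 hgO.2.2)
  have hsub : I ∪ O ⊆ ↑(B.erase e) := by
    rintro g (hg | hg) <;> exact Finset.mem_erase.mpr ⟨hg.2.1, hg.1⟩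
  have hfin : (↑(B.erase e) : Set (Sym2 (ZMod (2 * m)))).Finite := Finset.finite_toSet _
  have hcard : (↑(B.erase e) : Set (Sym2 (ZMod (2 * m)))).ncard = K + L := by
    rw [Set.ncard_coe_finset, Finset.card_erase_of_mem he, hB.2]
    omega
  have hunion : (I ∪ O).ncard = I.ncard + O.ncard :=
    Set.ncard_union_eq hdisj (hfin.subset (Set.subset_union_left.trans hsub))
      (hfin.subset (Set.subset_union_right.trans hsub))
  have hle := Set.ncard_le_ncard hsub hfin
  have hcover : I ∪ O = ↑(B.erase e) := Set.eq_of_subset_of_ncard_le hsub (by omega) hfin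
  refine ⟨by omega, by omega, fun g hg => ?_⟩
  by_cases hge : g = e
  · refine not_cross_of_onArc (by omega) ?_
    rintro v hv
    rw [hge, Sym2.mem_iff] at hv
    rcases hv with rfl | rfl
    exacts [⟨0, by omega, rfl⟩, ⟨2 * K + 1, le_rfl, rfl⟩]
  · have hgIO : g ∈ I ∪ O := hcover ▸ Finset.mem_erase.mpr ⟨hge, hg⟩
    rcases hgIO with hgI | hgO
    · exact not_cross_of_onArc (by omega) hgI.2.2
    · rw [he']
      exact not_cross_of_onArc (by omega) hgO.2.2

end IsBlocker

theorem blocker_edge_splits_general (m : ℕ)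
    (B : Finset (Sym2 (ZMod (2 * m)))) (hB : IsBlocker m B)
    (i j : ℕ) (hj : j ≤ 2 * m - 1) (hodd : Odd (j - i))
    (he : s((i : ZMod (2 * m)), (j : ZMod (2 * m))) ∈ B) :
    {g : Sym2 (ZMod (2 * m)) | g ∈ B ∧ g ≠ s((i : ZMod (2 * m)), (j : ZMod (2 * m))) ∧
        ∀ v ∈ g, ∃ a : ℕ, i ≤ a ∧ a ≤ j ∧ v = (a : ZMod (2 * m))}.ncard
      = (j - i - 1) / 2 ∧
    {g : Sym2 (ZMod (2 * m)) | g ∈ B ∧ g ≠ s((i : ZMod (2 * m)), (j : ZMod (2 * m))) ∧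
        ∀ v ∈ g, ∃ a : ℕ, a ≤ 2 * m - 1 ∧ (j ≤ a ∨ a ≤ i) ∧ v = (a : ZMod (2 * m))}.ncard
      = m - 1 - (j - i - 1) / 2 ∧
    ∀ g ∈ B, ¬ Cross (2 * m) g (s((i : ZMod (2 * m)), (j : ZMod (2 * m)))) := by
  obtain ⟨K, hK⟩ := hodd
  obtain rfl : j = i + (2 * K + 1) := by omega
  have hKL : 2 * K + 1 + (2 * (m - 1 - K) + 1) = 2 * m := by omega
  simp_rw [exists_natCast_iff_onArc,
    exists_natCast_wrap_iff_onArc (by omega) (by omega : i + (2 * K + 1) < 2 * m)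
      (by omega : i + (2 * K + 1) + (2 * (m - 1 - K) + 1) = 2 * m + i),
    show (i + (2 * K + 1) - i - 1) / 2 = K by omega]
  exact hB.ncard_sides hKL he

theorem blocker_edge_splits (m : ℕ) (hm : 2 ≤ m)
    (B : Finset (Sym2 (ZMod (2 * m)))) (hB : IsBlocker m B)
    (i j : ℕ) (hij : i < j) (hj : j ≤ 2 * m - 1) (hodd : Odd (j - i))
    (he : s((i : ZMod (2 * m)), (j : ZMod (2 * m))) ∈ B) :
    {g : Sym2 (ZMod (2 * m)) | g ∈ B ∧ g ≠ s((i : ZMod (2 * m)), (j : ZMod (2 * m))) ∧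
        ∀ v ∈ g, ∃ a : ℕ, i ≤ a ∧ a ≤ j ∧ v = (a : ZMod (2 * m))}.ncard
      = (j - i - 1) / 2 ∧
    {g : Sym2 (ZMod (2 * m)) | g ∈ B ∧ g ≠ s((i : ZMod (2 * m)), (j : ZMod (2 * m))) ∧
        ∀ v ∈ g, ∃ a : ℕ, a ≤ 2 * m - 1 ∧ (j ≤ a ∨ a ≤ i) ∧ v = (a : ZMod (2 * m))}.ncard
      = m - 1 - (j - i - 1) / 2 ∧
    ∀ g ∈ B, ¬ Cross (2 * m) g (s((i : ZMod (2 * m)), (j : ZMod (2 * m)))) :=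
  blocker_edge_splits_general m B hB i j hj hodd he
end
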